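/- arXiv:2412.01696 — 3 statements merged into one kernel-verified Lean document; each statement's English description precedes it below -/
import Mathlib

section
/- Let ρ be a d×d density matrix whose minimal nonzero eigenvalue is κ with 0 < κ < 1, and let 0 < ε < 1. Define S_N(ρ) := Σ_{j=1}^N (1/j) · tr(ρ (I − ρ)^j) and S(ρ) := −Σ_{i : λ_i ≠ 0} λ_i ln λ_i where λ_i are the eigenvalues of ρ with multiplicity. If N is a natural number with N ≥ ln(2/(ε κ)) / ln(1/(1 − κ)), then |S_N(ρ) − S(ρ)| ≤ ε/2. -/
open Matrix
open scoped ComplexOrder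

/-- The truncated Taylor series `S_N(ρ) = Σ_{j=1}^N (1/j) · tr(ρ (I − ρ)^j)`. -/
noncomputable def truncEntropy (d : ℕ) (ρ : Matrix (Fin d) (Fin d) ℂ) (N : ℕ) : ℂ :=
  ∑ j ∈ Finset.Icc 1 N, (1 / (j : ℂ)) * (ρ * (1 - ρ) ^ j).trace

/-- The von Neumann entropy `S(ρ) = −Σ_{i : λ_i ≠ 0} λ_i ln λ_i`, where the `λ_i`
are the (real) eigenvalues of the Hermitian matrix `ρ`, with multiplicity. -/
noncomputable def vonNeumannEntropy (d : ℕ) {ρ : Matrix (Fin d) (Fin d) ℂ}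
    (hρ : ρ.IsHermitian) : ℝ :=
  -∑ i ∈ Finset.univ.filter (fun i => hρ.eigenvalues i ≠ 0),
      hρ.eigenvalues i * Real.log (hρ.eigenvalues i)

/-!
In an eigenbasis of `ρ`, `tr (ρ (I - ρ) ^ j) = ∑ᵢ λᵢ (1 - λᵢ) ^ j`, so `S(ρ) - S_N(ρ)` is
`∑ᵢ λᵢ Rᵢ`, where `Rᵢ ≥ 0` is the tail after `N` terms of `-log λᵢ = ∑_{j ≥ 1} (1 - λᵢ) ^ j / j`
(zero eigenvalues contribute nothing). A geometric bound gives `Rᵢ ≤ (1 - λᵢ) ^ (N + 1) / λᵢ`,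
which is at most `(1 - κ) ^ (N + 1) / κ` once `λᵢ ≥ κ`; as `∑ᵢ λᵢ = 1`, the error is at most
`(1 - κ) ^ N / κ`, and the choice of `N` is exactly what makes `(1 - κ) ^ N ≤ εκ / 2`.
-/

namespace Matrix.IsHermitian

variable {𝕜 n : Type*} [RCLike 𝕜] [Fintype n] [DecidableEq n] {A : Matrix n n 𝕜}

theorem trace_mul_one_sub_pow (hA : A.IsHermitian) (j : ℕ) :
    (A * (1 - A) ^ j).trace =
      ((∑ i, hA.eigenvalues i * (1 - hA.eigenvalues i) ^ j : ℝ) : 𝕜) := by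
  set U := Unitary.conjStarAlgAut 𝕜 (Matrix n n 𝕜) hA.eigenvectorUnitary
  set D : Matrix n n 𝕜 := diagonal (RCLike.ofReal ∘ hA.eigenvalues)
  have hconj : A * (1 - A) ^ j = U (D * (1 - D) ^ j) := by
    rw [map_mul, map_pow, map_sub, map_one, ← hA.spectral_theorem]
  have hdiag : D * (1 - D) ^ j =
      diagonal fun i => (hA.eigenvalues i : 𝕜) * (1 - hA.eigenvalues i) ^ j := by
    rw [← diagonal_one, diagonal_sub, diagonal_pow, diagonal_mul_diagonal]
    rfl
  rw [hconj, Unitary.conjStarAlgAut_apply, trace_mul_cycle, Unitary.coe_star_mul_self, one_mul,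
    hdiag, trace_diagonal]
  push_cast
  rfl

end Matrix.IsHermitian

open Finset Real

namespace Real

theorem sum_range_pow_div_le_neg_log_one_sub {x : ℝ} (hx0 : 0 ≤ x) (hx1 : x < 1) (n : ℕ) :
    ∑ i ∈ range n, x ^ (i + 1) / (i + 1) ≤ -log (1 - x) :=
  sum_le_hasSum _ (fun i _ => by positivity)
    (hasSum_pow_div_log_of_abs_lt_one (by rwa [abs_of_nonneg hx0]))

theorem neg_log_one_sub_sub_sum_range_le {x : ℝ} (hx0 : 0 ≤ x) (hx1 : x < 1) (n : ℕ) :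
    -log (1 - x) - ∑ i ∈ range n, x ^ (i + 1) / (i + 1) ≤ x ^ (n + 1) / (1 - x) := by
  have h := abs_log_sub_add_sum_range_le (x := x) (by rwa [abs_of_nonneg hx0]) n
  rw [abs_of_nonneg hx0] at h
  linarith [neg_abs_le ((∑ i ∈ range n, x ^ (i + 1) / (i + 1)) + log (1 - x))]

theorem pow_le_of_log_one_div_div_log_one_div_le {q δ : ℝ} (hq0 : 0 < q) (hq1 : q < 1)
    (hδ : 0 < δ) {N : ℕ} (hN : log (1 / δ) / log (1 / q) ≤ N) : q ^ N ≤ δ := by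
  have hlog : 0 < log (1 / q) := log_pos ((one_lt_div hq0).mpr hq1)
  rw [div_le_iff₀ hlog, one_div, one_div, log_inv, log_inv] at hN
  rw [← log_le_log_iff (pow_pos hq0 N) hδ, log_pow]
  linarith

end Real

noncomputable def negLogTaylor (N : ℕ) (t : ℝ) : ℝ :=
  ∑ k ∈ range N, (1 - t) ^ (k + 1) / (k + 1)

theorem mul_negLogTaylor_le_negMulLog {t : ℝ} (h0 : 0 ≤ t) (h1 : t ≤ 1) (N : ℕ) :
    t * negLogTaylor N t ≤ negMulLog t := by
  rcases h0.eq_or_lt with rfl | ht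
  · simp
  have h := sum_range_pow_div_le_neg_log_one_sub (x := 1 - t) (by linarith) (by linarith) N
  rw [sub_sub_cancel] at h
  rw [negMulLog, neg_mul, ← mul_neg]
  exact mul_le_mul_of_nonneg_left h ht.le

theorem negMulLog_sub_mul_negLogTaylor_le {t κ : ℝ} (hκ : 0 < κ) (hκt : κ ≤ t) (h1 : t ≤ 1)
    (N : ℕ) : negMulLog t - t * negLogTaylor N t ≤ t * ((1 - κ) ^ (N + 1) / κ) := by
  have ht : 0 < t := hκ.trans_le hκt
  have h := neg_log_one_sub_sub_sum_range_le (x := 1 - t) (by linarith) (by linarith) N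
  rw [sub_sub_cancel] at h
  have hmono : (1 - t) ^ (N + 1) / t ≤ (1 - κ) ^ (N + 1) / κ :=
    div_le_div₀ (pow_nonneg (by linarith) _)
      (pow_le_pow_left₀ (by linarith) (by linarith) _) hκ hκt
  rw [negMulLog, neg_mul, ← mul_neg, ← mul_sub]
  exact mul_le_mul_of_nonneg_left (h.trans hmono) ht.le

section

variable {d : ℕ} {ρ : Matrix (Fin d) (Fin d) ℂ}

theorem truncEntropy_eq_sum_eigenvalues (hρ : ρ.IsHermitian) (N : ℕ) :
    truncEntropy d ρ N =
      ((∑ i, hρ.eigenvalues i * negLogTaylor N (hρ.eigenvalues i) : ℝ) : ℂ) := by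
  rw [truncEntropy, ← Ico_add_one_right_eq_Icc, sum_Ico_eq_sum_range,
    add_tsub_cancel_right]
  simp only [negLogTaylor, hρ.trace_mul_one_sub_pow, Complex.coe_algebraMap]
  push_cast
  simp only [mul_sum]
  rw [sum_comm]
  refine sum_congr rfl fun k _ => sum_congr rfl fun i _ => ?_
  ring

theorem vonNeumannEntropy_eq_sum_negMulLog (hρ : ρ.IsHermitian) :
    vonNeumannEntropy d hρ = ∑ i, negMulLog (hρ.eigenvalues i) := by
  have hzero : ∀ i ∈ univ,
      hρ.eigenvalues i * log (hρ.eigenvalues i) ≠ 0 → hρ.eigenvalues i ≠ 0 :=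
    fun i _ h hi => h (by simp [hi])
  rw [vonNeumannEntropy, sum_filter_of_ne hzero, ← sum_neg_distrib]
  simp only [negMulLog, neg_mul]

theorem norm_truncEntropy_sub_vonNeumannEntropy_le (hρ : ρ.PosSemidef) (hρtr : ρ.trace = 1)
    {κ : ℝ} (hκ0 : 0 < κ)
    (hκmin : ∀ i, hρ.isHermitian.eigenvalues i ≠ 0 → κ ≤ hρ.isHermitian.eigenvalues i)
    (N : ℕ) :
    ‖truncEntropy d ρ N - ((vonNeumannEntropy d hρ.isHermitian : ℝ) : ℂ)‖ ≤
      (1 - κ) ^ (N + 1) / κ := by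
  set t := hρ.isHermitian.eigenvalues
  have ht0 : ∀ i, 0 ≤ t i := hρ.eigenvalues_nonneg
  have hsum : ∑ i, t i = 1 := by
    have h := hρ.isHermitian.trace_eq_sum_eigenvalues
    rw [hρtr] at h
    simpa using congrArg Complex.re h.symm
  have ht1 : ∀ i, t i ≤ 1 := fun i =>
    hsum ▸ single_le_sum (fun j _ => ht0 j) (mem_univ i)
  have herr : ∀ i,
      negMulLog (t i) - t i * negLogTaylor N (t i) ≤ t i * ((1 - κ) ^ (N + 1) / κ) := by
    intro i
    rcases (ht0 i).eq_or_lt with h | h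
    · simp [← h]
    · exact negMulLog_sub_mul_negLogTaylor_le hκ0 (hκmin i h.ne') (ht1 i) N
  rw [truncEntropy_eq_sum_eigenvalues hρ.isHermitian, vonNeumannEntropy_eq_sum_negMulLog,
    ← Complex.ofReal_sub, Complex.norm_real, Real.norm_eq_abs, abs_sub_comm, ← sum_sub_distrib,
    abs_of_nonneg (sum_nonneg fun i _ => sub_nonneg.mpr
      (mul_negLogTaylor_le_negMulLog (ht0 i) (ht1 i) N))]
  calc ∑ i, (negMulLog (t i) - t i * negLogTaylor N (t i))
      ≤ ∑ i, t i * ((1 - κ) ^ (N + 1) / κ) := sum_le_sum fun i _ => herr i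
    _ = (1 - κ) ^ (N + 1) / κ := by rw [← sum_mul, hsum, one_mul]

end

theorem stmt5_general (d : ℕ) (ρ : Matrix (Fin d) (Fin d) ℂ)
    (hρ : ρ.PosSemidef) (hρtr : ρ.trace = 1)
    (κ : ℝ) (hκ0 : 0 < κ) (hκ1 : κ < 1)
    (hκmin : ∀ i, hρ.isHermitian.eigenvalues i ≠ 0 → κ ≤ hρ.isHermitian.eigenvalues i)
    (ε : ℝ) (hε0 : 0 < ε)
    (N : ℕ) (hN : Real.log (2 / (ε * κ)) / Real.log (1 / (1 - κ)) ≤ (N : ℝ)) :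
    ‖truncEntropy d ρ N - ((vonNeumannEntropy d hρ.isHermitian : ℝ) : ℂ)‖
      ≤ ε / 2 := by
  have hq0 : 0 < 1 - κ := by linarith
  rw [← one_div_div (ε * κ)] at hN
  have hpow : (1 - κ) ^ N ≤ ε * κ / 2 :=
    pow_le_of_log_one_div_div_log_one_div_le hq0 (by linarith) (by positivity) hN
  calc _ ≤ (1 - κ) ^ (N + 1) / κ :=
        norm_truncEntropy_sub_vonNeumannEntropy_le hρ hρtr hκ0 hκmin N
    _ ≤ (1 - κ) ^ N / κ :=
      div_le_div_of_nonneg_right (pow_le_pow_of_le_one hq0.le (by linarith) N.le_succ) hκ0.le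
    _ ≤ ε / 2 := by rw [div_le_iff₀ hκ0]; linarith

/-- If `κ` is the minimal nonzero eigenvalue of the density matrix `ρ` (with `0 < κ < 1`),
`0 < ε < 1`, and `N ≥ ln(2/(εκ)) / ln(1/(1−κ))`, then `|S_N(ρ) − S(ρ)| ≤ ε/2`. -/
theorem stmt5 (d : ℕ) (ρ : Matrix (Fin d) (Fin d) ℂ)
    (hρ : ρ.PosSemidef) (hρtr : ρ.trace = 1)
    (κ : ℝ) (hκ0 : 0 < κ) (hκ1 : κ < 1)
    (hκmem : ∃ i, hρ.isHermitian.eigenvalues i = κ)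
    (hκmin : ∀ i, hρ.isHermitian.eigenvalues i ≠ 0 → κ ≤ hρ.isHermitian.eigenvalues i)
    (ε : ℝ) (hε0 : 0 < ε) (hε1 : ε < 1)
    (N : ℕ) (hN : Real.log (2 / (ε * κ)) / Real.log (1 / (1 - κ)) ≤ (N : ℝ)) :
    ‖truncEntropy d ρ N - ((vonNeumannEntropy d hρ.isHermitian : ℝ) : ℂ)‖
      ≤ ε / 2 :=
  stmt5_general d ρ hρ hρtr κ hκ0 hκ1 hκmin ε hε0 N hN
end

section
/- Let ρ be a d×d density matrix, let n ≥ 1, let p_1, …, p_n ≥ 0 with Σ_j p_j = 1, and let θ_1, …, θ_n ∈ ℝ. On the Hilbert space ℂ^n ⊗ ℂ² ⊗ (ℂ^d)^{⊗n} define W := Σ_{j=1}^n |j⟩⟨j| ⊗ [ (|0⟩⟨0| ⊗ I + |1⟩⟨1| ⊗ (P_j ⊗ I)) · (R_y(θ_j) ⊗ I) ], where R_y(θ) is the 2×2 rotation with first column (cos(θ/2), sin(θ/2)) and second column (−sin(θ/2), cos(θ/2)), and P_j ⊗ I acts as the cyclic permutation on the first j factors of (ℂ^d)^{⊗n} and identity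 elsewhere. Let ψ := Σ_j √(p_j) |j⟩ and X the Pauli-X matrix. Then tr[ (I_n ⊗ X ⊗ I) · W (|ψ⟩⟨ψ| ⊗ |0⟩⟨0| ⊗ ρ^{⊗n}) W† ] = Σ_{j=1}^n p_j sin(θ_j) tr(ρ^j). -/
/-!
The circuit `W` is block diagonal in the control register, so the expectation value is the
`p_j`-weighted sum of the expectations of the single blocks. In block `j` the rotation prepares
`cos(θ/2)|0⟩ + sin(θ/2)|1⟩`, and the Pauli-X measurement keeps only the interference terms
`cos(θ/2) sin(θ/2) (tr(P_j σ) + tr(σ P_j†))` with `σ = ρ^{⊗n}`. Expanding `tr(P_j ρ^{⊗n})` in the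
standard basis, the factors on the permuted positions chain into a closed path of length `j`,
which sums to `tr(ρ^j)`, while every fixed position contributes `tr ρ = 1`. The second
interference term reduces to the first by transposition, as `P_j` is a real permutation matrix
and `(ρ^{⊗n})ᵀ = (ρᵀ)^{⊗n}`.
-/

open Matrix Kronecker
open scoped ComplexOrder

/-- `|0⟩⟨0|` on one qubit. -/
noncomputable def ketbra0 : Matrix (Fin 2) (Fin 2) ℂ := !![1, 0; 0, 0]

/-- `|1⟩⟨1|` on one qubit. -/
noncomputable def ketbra1 : Matrix (Fin 2) (Fin 2) ℂ := !![0, 0; 0, 1]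

/-- The Pauli-X matrix. -/
noncomputable def pauliX : Matrix (Fin 2) (Fin 2) ℂ := !![0, 1; 1, 0]

/-- The single-qubit rotation `R_y(θ)` with first column `(cos(θ/2), sin(θ/2))`
and second column `(−sin(θ/2), cos(θ/2))`. -/
noncomputable def Ry (θ : ℝ) : Matrix (Fin 2) (Fin 2) ℂ :=
  !![(Real.cos (θ / 2) : ℂ), (-(Real.sin (θ / 2)) : ℝ);
     (Real.sin (θ / 2) : ℂ), (Real.cos (θ / 2) : ℂ)]

/-- The n-fold tensor (Kronecker) power `ρ^{⊗n}`, indexed by tuples `Fin n → Fin d`. -/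
noncomputable def tensorPow (d n : ℕ) (ρ : Matrix (Fin d) (Fin d) ℂ) :
    Matrix (Fin n → Fin d) (Fin n → Fin d) ℂ :=
  Matrix.of fun x y => ∏ i, ρ (x i) (y i)

/-- The index map underlying the cyclic permutation of the first `j` of `n` tensor factors. -/
def cycIdx (n j : ℕ) (i : Fin n) : Fin n :=
  if h : (i : ℕ) + 1 < j ∧ (i : ℕ) + 1 < n then ⟨(i : ℕ) + 1, h.2⟩
  else if (i : ℕ) + 1 = j then ⟨0, i.pos⟩
  else i

/-- `P_j ⊗ I`: the cyclic permutation operator on the first `j` tensor factors of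
`(ℂ^d)^{⊗n}`, identity on the remaining factors. -/
noncomputable def cycPerm (d n j : ℕ) : Matrix (Fin n → Fin d) (Fin n → Fin d) ℂ :=
  Matrix.of fun y x => if y = (fun i => x (cycIdx n j i)) then 1 else 0

/-- The QSF circuit
`W = Σ_{j=1}^n |j⟩⟨j| ⊗ [(|0⟩⟨0| ⊗ I + |1⟩⟨1| ⊗ (P_j ⊗ I)) · (R_y(θ_j) ⊗ I)]`
on `ℂ^n ⊗ ℂ² ⊗ (ℂ^d)^{⊗n}` (the index `j : Fin n` encodes the degree `j + 1`). -/
noncomputable def qsfW (d n : ℕ) (θ : Fin n → ℝ) :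
    Matrix (Fin n × Fin 2 × (Fin n → Fin d)) (Fin n × Fin 2 × (Fin n → Fin d)) ℂ :=
  ∑ j : Fin n, Matrix.single j j (1 : ℂ) ⊗ₖ
    ((ketbra0 ⊗ₖ (1 : Matrix (Fin n → Fin d) (Fin n → Fin d) ℂ)
        + ketbra1 ⊗ₖ cycPerm d n ((j : ℕ) + 1)) *
      (Ry (θ j) ⊗ₖ (1 : Matrix (Fin n → Fin d) (Fin n → Fin d) ℂ)))

section PathSum

variable {ι R : Type*} [Fintype ι] [CommSemiring R]

theorem Fintype.sum_pi_fin_succ {n : ℕ} (f : (Fin (n + 1) → ι) → R) :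
    ∑ x, f x = ∑ c : ι, ∑ y : Fin n → ι, f (Fin.snoc y c) := by
  rw [← Equiv.sum_comp (Fin.snocEquiv fun _ => ι) f, Fintype.sum_prod_type]
  rfl

theorem Matrix.trace_pow_mul_eq_sum_path [DecidableEq ι] (A B : Matrix ι ι R) (m : ℕ) :
    (A ^ m * B).trace =
      ∑ x : Fin (m + 1) → ι,
        (∏ i : Fin m, A (x i.castSucc) (x i.succ)) * B (x (Fin.last m)) (x 0) := by
  induction m generalizing B with
  | zero =>
    rw [pow_zero, one_mul, ← Equiv.sum_comp (Equiv.funUnique (Fin 1) ι).symm]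
    simp [trace]
  | succ m ih =>
    have snoc_term (y : Fin (m + 1) → ι) (c : ι) :
        (∏ i : Fin (m + 1), A ((Fin.snoc y c : Fin (m + 2) → ι) i.castSucc)
            ((Fin.snoc y c : Fin (m + 2) → ι) i.succ)) *
          B ((Fin.snoc y c : Fin (m + 2) → ι) (Fin.last (m + 1)))
            ((Fin.snoc y c : Fin (m + 2) → ι) 0) =
        (∏ i : Fin m, A (y i.castSucc) (y i.succ)) * (A (y (Fin.last m)) c * B c (y 0)) := by
      rw [Fin.prod_univ_castSucc, show (0 : Fin (m + 2)) = (0 : Fin (m + 1)).castSucc from rfl]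
      simp only [Fin.succ_castSucc, Fin.succ_last, Fin.snoc_castSucc, Fin.snoc_last]
      ring
    rw [Fintype.sum_pi_fin_succ, Finset.sum_comm]
    simp only [snoc_term, ← Finset.mul_sum, ← mul_apply]
    rw [← ih, pow_succ, Matrix.mul_assoc]

end PathSum

section CycIdx

theorem cycIdx_castSucc {n j : ℕ} (hjn : j ≤ n) (i : Fin n) :
    cycIdx (n + 1) j i.castSucc = (cycIdx n j i).castSucc := by
  simp only [cycIdx, Fin.val_castSucc]
  by_cases hlt : (i : ℕ) + 1 < j
  · rw [dif_pos ⟨hlt, by omega⟩, dif_pos ⟨hlt, by omega⟩]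
    rfl
  · rw [dif_neg (by omega), dif_neg (by omega)]
    split_ifs <;> rfl

theorem cycIdx_last {n j : ℕ} (hjn : j ≤ n) : cycIdx (n + 1) j (Fin.last n) = Fin.last n := by
  unfold cycIdx
  rw [dif_neg (by simp), if_neg (by simp; omega)]

theorem cycIdx_self_castSucc {m : ℕ} (i : Fin m) :
    cycIdx (m + 1) (m + 1) i.castSucc = i.succ := by
  unfold cycIdx
  rw [dif_pos ⟨by simp, by simp⟩]
  rfl

theorem cycIdx_self_last (m : ℕ) : cycIdx (m + 1) (m + 1) (Fin.last m) = 0 := by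
  unfold cycIdx
  rw [dif_neg (by simp), if_pos (by simp)]
  rfl

variable {ι R : Type*} [Fintype ι] [DecidableEq ι] [CommSemiring R]

theorem sum_prod_cycIdx_self (ρ : Matrix ι ι R) (m : ℕ) :
    ∑ x : Fin (m + 1) → ι, ∏ i, ρ (x i) (x (cycIdx (m + 1) (m + 1) i)) = (ρ ^ (m + 1)).trace := by
  rw [pow_succ, Matrix.trace_pow_mul_eq_sum_path]
  refine Finset.sum_congr rfl fun x _ => ?_
  rw [Fin.prod_univ_castSucc, cycIdx_self_last]
  simp only [cycIdx_self_castSucc]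

theorem sum_prod_cycIdx (ρ : Matrix ι ι R) {j n : ℕ} (hj : 1 ≤ j) (hjn : j ≤ n) :
    ∑ x : Fin n → ι, ∏ i, ρ (x i) (x (cycIdx n j i)) = (ρ ^ j).trace * ρ.trace ^ (n - j) := by
  induction n, hjn using Nat.le_induction with
  | base =>
    obtain ⟨m, rfl⟩ := Nat.exists_eq_add_of_le' hj
    rw [sum_prod_cycIdx_self, Nat.sub_self, pow_zero, mul_one]
  | succ n hjn ih =>
    have snoc_term (c : ι) (y : Fin n → ι) :
        ∏ i, ρ ((Fin.snoc y c : Fin (n + 1) → ι) i)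
            ((Fin.snoc y c : Fin (n + 1) → ι) (cycIdx (n + 1) j i)) =
          (∏ i, ρ (y i) (y (cycIdx n j i))) * ρ c c := by
      rw [Fin.prod_univ_castSucc, cycIdx_last hjn]
      simp only [cycIdx_castSucc hjn, Fin.snoc_castSucc, Fin.snoc_last]
    rw [Fintype.sum_pi_fin_succ, Finset.sum_comm]
    simp only [snoc_term, ← Finset.mul_sum]
    rw [← Finset.sum_mul, ih, Nat.sub_add_comm hjn, pow_succ, mul_assoc]
    rfl

end CycIdx

section CycPerm

variable (d n j : ℕ) (ρ : Matrix (Fin d) (Fin d) ℂ)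

theorem trace_cycPerm_mul_tensorPow (hj : 1 ≤ j) (hjn : j ≤ n) :
    (cycPerm d n j * tensorPow d n ρ).trace = (ρ ^ j).trace * ρ.trace ^ (n - j) := by
  rw [← sum_prod_cycIdx ρ hj hjn]
  simp only [trace, diag_apply, mul_apply, cycPerm, tensorPow, of_apply, ite_mul, one_mul,
    zero_mul]
  rw [Finset.sum_comm]
  simp

theorem cycPerm_conjTranspose : (cycPerm d n j)ᴴ = (cycPerm d n j)ᵀ := by
  ext
  simp [cycPerm, apply_ite]

theorem tensorPow_transpose : (tensorPow d n ρ)ᵀ = tensorPow d n ρᵀ := rfl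

theorem trace_tensorPow_mul_cycPerm_conjTranspose (hj : 1 ≤ j) (hjn : j ≤ n) :
    (tensorPow d n ρ * (cycPerm d n j)ᴴ).trace = (ρ ^ j).trace * ρ.trace ^ (n - j) := by
  rw [cycPerm_conjTranspose, ← trace_transpose, transpose_mul, transpose_transpose,
    tensorPow_transpose, trace_cycPerm_mul_tensorPow d n j ρᵀ hj hjn, ← transpose_pow,
    trace_transpose, trace_transpose]

end CycPerm

theorem Matrix.conjTranspose_fin_two_of {α : Type*} [Star α] (a b c d : α) :
    !![a, b; c, d]ᴴ = !![star a, star c; star b, star d] := by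
  ext i j
  fin_cases i <;> fin_cases j <;> rfl

noncomputable def controlled {ι : Type*} [DecidableEq ι] (U : Matrix ι ι ℂ) :
    Matrix (Fin 2 × ι) (Fin 2 × ι) ℂ :=
  ketbra0 ⊗ₖ 1 + ketbra1 ⊗ₖ U

theorem trace_pauliX_kronecker_mul_controlled_conj {ι : Type*} [Fintype ι] [DecidableEq ι]
    (θ : ℝ) (U σ : Matrix ι ι ℂ) :
    ((pauliX ⊗ₖ 1) * (controlled U * (Ry θ ⊗ₖ 1) * (ketbra0 ⊗ₖ σ) *
        (controlled U * (Ry θ ⊗ₖ 1))ᴴ)).trace =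
      (Real.sin θ / 2 : ℝ) * ((U * σ).trace + (σ * Uᴴ).trace) := by
  simp only [controlled, conjTranspose_mul, conjTranspose_add, conjTranspose_kronecker,
    conjTranspose_one, add_mul, mul_add, ← Matrix.mul_assoc, ← mul_kronecker_mul, trace_add,
    trace_kronecker, Matrix.one_mul, Matrix.mul_one]
  have sin_eq : Real.sin θ = 2 * Real.sin (θ / 2) * Real.cos (θ / 2) := by
    rw [← Real.sin_two_mul, mul_div_cancel₀ θ two_ne_zero]
  simp [pauliX, ketbra0, ketbra1, Ry, conjTranspose_fin_two_of, trace_fin_two, sin_eq,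
    -Complex.ofReal_cos, -Complex.ofReal_sin]
  ring

section Multiplexed

variable {ι κ R : Type*} [Fintype ι] [DecidableEq ι] [Fintype κ] [CommRing R] [StarRing R]

def multiplexed (M : ι → Matrix κ κ R) : Matrix (ι × κ) (ι × κ) R :=
  ∑ j, single j j 1 ⊗ₖ M j

theorem trace_one_kronecker_mul_multiplexed_conj (A S : Matrix κ κ R) (V : Matrix ι ι R)
    (M : ι → Matrix κ κ R) :
    ((1 ⊗ₖ A) * (multiplexed M * (V ⊗ₖ S) * (multiplexed M)ᴴ)).trace =
      ∑ j, V j j * (A * (M j * S * (M j)ᴴ)).trace := by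
  simp only [multiplexed, conjTranspose_sum, conjTranspose_kronecker, conjTranspose_single,
    star_one, Finset.sum_mul, Finset.mul_sum, trace_sum, ← mul_kronecker_mul, trace_kronecker,
    single_mul_mul_single, one_mul, mul_one]
  refine Finset.sum_congr rfl fun j _ => ?_
  rw [Finset.sum_eq_single j (fun k _ hkj => by rw [trace_single_eq_of_ne k j _ hkj, zero_mul])
    (absurd (Finset.mem_univ j)), trace_single_eq_same]

end Multiplexed

theorem qsfW_eq_multiplexed (d n : ℕ) (θ : Fin n → ℝ) :
    qsfW d n θ =
      multiplexed fun j : Fin n => controlled (cycPerm d n ((j : ℕ) + 1)) * (Ry (θ j) ⊗ₖ 1) :=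
  rfl

theorem stmt12_general (d n : ℕ)
    (ρ : Matrix (Fin d) (Fin d) ℂ) (hρtr : ρ.trace = 1)
    (p : Fin n → ℝ) (hp : ∀ j, 0 ≤ p j)
    (θ : Fin n → ℝ) :
    (((1 : Matrix (Fin n) (Fin n) ℂ) ⊗ₖ
          (pauliX ⊗ₖ (1 : Matrix (Fin n → Fin d) (Fin n → Fin d) ℂ))) *
        (qsfW d n θ *
          (Matrix.vecMulVec (fun j => ((Real.sqrt (p j) : ℝ) : ℂ))
              (star fun j => ((Real.sqrt (p j) : ℝ) : ℂ)) ⊗ₖ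
            (ketbra0 ⊗ₖ tensorPow d n ρ)) *
          (qsfW d n θ)ᴴ)).trace
      = ∑ j : Fin n, ((p j * Real.sin (θ j) : ℝ) : ℂ) * (ρ ^ ((j : ℕ) + 1)).trace := by
  rw [qsfW_eq_multiplexed, trace_one_kronecker_mul_multiplexed_conj]
  refine Finset.sum_congr rfl fun j _ => ?_
  have hj : (j : ℕ) + 1 ≤ n := j.isLt
  rw [trace_pauliX_kronecker_mul_controlled_conj,
    trace_cycPerm_mul_tensorPow d n _ ρ (Nat.le_add_left 1 j) hj,
    trace_tensorPow_mul_cycPerm_conjTranspose d n _ ρ (Nat.le_add_left 1 j) hj, hρtr,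
    vecMulVec_apply, Pi.star_apply, Complex.star_def, Complex.conj_ofReal, ← Complex.ofReal_mul,
    Real.mul_self_sqrt (hp j)]
  push_cast
  ring

/-- The exact Pauli-X expectation of the QSF circuit: for a density matrix `ρ`,
weights `p_j ≥ 0` summing to `1`, control state `ψ = Σ_j √(p_j) |j⟩` and angles `θ_j`,
`tr[(I ⊗ X ⊗ I) · W (|ψ⟩⟨ψ| ⊗ |0⟩⟨0| ⊗ ρ^{⊗n}) W†] = Σ_j p_j sin(θ_j) tr(ρ^j)`. -/
theorem stmt12 (d n : ℕ) (hd : 1 ≤ d) (hn : 1 ≤ n)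
    (ρ : Matrix (Fin d) (Fin d) ℂ) (hρ : ρ.PosSemidef) (hρtr : ρ.trace = 1)
    (p : Fin n → ℝ) (hp : ∀ j, 0 ≤ p j) (hpsum : ∑ j, p j = 1)
    (θ : Fin n → ℝ) :
    (((1 : Matrix (Fin n) (Fin n) ℂ) ⊗ₖ
          (pauliX ⊗ₖ (1 : Matrix (Fin n → Fin d) (Fin n → Fin d) ℂ))) *
        (qsfW d n θ *
          (Matrix.vecMulVec (fun j => ((Real.sqrt (p j) : ℝ) : ℂ))
              (star fun j => ((Real.sqrt (p j) : ℝ) : ℂ)) ⊗ₖ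
            (ketbra0 ⊗ₖ tensorPow d n ρ)) *
          (qsfW d n θ)ᴴ)).trace
      = ∑ j : Fin n, ((p j * Real.sin (θ j) : ℝ) : ℂ) * (ρ ^ ((j : ℕ) + 1)).trace :=
  stmt12_general d n ρ hρtr p hp θ
end

section
/- There exists a constant c > 0 such that for all κ, ε with 0 < κ ≤ 1/2 and 0 < ε ≤ 1/2, there is a real polynomial f of degree at most c · (1/κ) · ln(1/ε) such that |f(x) − (1/2)√x| ≤ ε for every x ∈ [κ, 1]. -/
open Finset

noncomputable def sqc : ℕ → ℝ
  | 0 => 0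
  | 1 => 1/2
  | (m+2) => (1/2) * ∑ i ∈ (Finset.Icc 1 (m+1)).attach, sqc i.1 * sqc (m+2-i.1)
  decreasing_by
  · have := (Finset.mem_Icc.mp i.2).2; omega
  · have := (Finset.mem_Icc.mp i.2).1; omega

lemma sqc_one : sqc 1 = 1/2 := by norm_num [sqc]

lemma sqc_rec (m : ℕ) (hm : 2 ≤ m) :
    sqc m = (1/2) * ∑ i ∈ Finset.Icc 1 (m-1), sqc i * sqc (m-i) := by
  obtain ⟨k, rfl⟩ : ∃ k, m = k + 2 := ⟨m - 2, by omega⟩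
  rw [sqc, show k + 2 - 1 = k + 1 from rfl]
  congr 1
  rw [Finset.sum_attach (Finset.Icc 1 (k+1)) (fun i => sqc i * sqc (k+2-i))]

lemma sqc_nonneg (k : ℕ) : 0 ≤ sqc k := by
  induction k using Nat.strong_induction_on with
  | _ k ih =>
    match k with
    | 0 => simp [sqc]
    | 1 => norm_num [sqc]
    | (m+2) =>
      rw [sqc_rec (m+2) (by omega), show m + 2 - 1 = m + 1 from rfl]
      have h : ∀ i ∈ Finset.Icc 1 (m+1), 0 ≤ sqc i * sqc (m+2-i) := by
        intro i hi
        have hi' := Finset.mem_Icc.mp hi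
        exact mul_nonneg (ih i (by omega)) (ih (m+2-i) (by omega))
      have := Finset.sum_nonneg h
      linarith

/-- triangle reindexing -/
lemma tri_sum (F : ℕ → ℕ → ℝ) (n : ℕ) :
    ∑ m ∈ Finset.Icc 2 n, ∑ i ∈ Finset.Icc 1 (m-1), F i (m-i)
      = ∑ p ∈ (Finset.Icc 1 n ×ˢ Finset.Icc 1 n).filter (fun p => p.1 + p.2 ≤ n),
          F p.1 p.2 := by
  rw [Finset.sum_sigma']
  apply Finset.sum_nbij' (i := fun x => (x.2, x.1 - x.2)) (j := fun p => ⟨p.1 + p.2, p.1⟩)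
  · intro x hx
    simp only [Finset.mem_sigma, Finset.mem_Icc] at hx
    simp only [Finset.mem_filter, Finset.mem_product, Finset.mem_Icc]
    omega
  · intro p hp
    simp only [Finset.mem_filter, Finset.mem_product, Finset.mem_Icc] at hp
    simp only [Finset.mem_sigma, Finset.mem_Icc]
    omega
  · intro x hx
    simp only [Finset.mem_sigma, Finset.mem_Icc] at hx
    obtain ⟨a, b⟩ := x
    simp only at hx ⊢
    have : b + (a - b) = a := by omega
    simp [this]
  · intro p hp
    simp only [Finset.mem_filter, Finset.mem_product, Finset.mem_Icc] at hp
    simp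
  · intro x hx
    rfl

lemma Icc_one_eq (n : ℕ) (hn : 1 ≤ n) :
    Finset.Icc 1 n = insert 1 (Finset.Icc 2 n) := by
  ext m; simp [Finset.mem_Icc]; omega

lemma sum_sqc_le_one (n : ℕ) : ∑ k ∈ Finset.Icc 1 n, sqc k ≤ 1 := by
  induction n with
  | zero => simp
  | succ n ih =>
    have hS0 : 0 ≤ ∑ k ∈ Finset.Icc 1 n, sqc k :=
      Finset.sum_nonneg fun k _ => sqc_nonneg k
    have htri : ∑ m ∈ Finset.Icc 2 (n+1), (2 * sqc m)
        = ∑ p ∈ (Finset.Icc 1 (n+1) ×ˢ Finset.Icc 1 (n+1)).filter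
            (fun p => p.1 + p.2 ≤ n+1), sqc p.1 * sqc p.2 := by
      rw [← tri_sum (fun i j => sqc i * sqc j) (n+1)]
      refine Finset.sum_congr rfl fun m hm => ?_
      rw [sqc_rec m (Finset.mem_Icc.mp hm).1]; ring
    have hsub : (Finset.Icc 1 (n+1) ×ˢ Finset.Icc 1 (n+1)).filter
            (fun p => p.1 + p.2 ≤ n+1) ⊆ Finset.Icc 1 n ×ˢ Finset.Icc 1 n := by
      intro p hp
      simp only [Finset.mem_filter, Finset.mem_product, Finset.mem_Icc] at hp ⊢
      omega
    have hle : ∑ p ∈ (Finset.Icc 1 (n+1) ×ˢ Finset.Icc 1 (n+1)).filter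
            (fun p => p.1 + p.2 ≤ n+1), sqc p.1 * sqc p.2
        ≤ ∑ p ∈ Finset.Icc 1 n ×ˢ Finset.Icc 1 n, sqc p.1 * sqc p.2 :=
      Finset.sum_le_sum_of_subset_of_nonneg hsub
        (fun p _ _ => mul_nonneg (sqc_nonneg _) (sqc_nonneg _))
    have hprod : ∑ p ∈ Finset.Icc 1 n ×ˢ Finset.Icc 1 n, sqc p.1 * sqc p.2
        = (∑ k ∈ Finset.Icc 1 n, sqc k) * (∑ k ∈ Finset.Icc 1 n, sqc k) := by
      rw [Finset.sum_mul_sum, ← Finset.sum_product']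
    have hsq : (∑ k ∈ Finset.Icc 1 n, sqc k) * (∑ k ∈ Finset.Icc 1 n, sqc k) ≤ 1 :=
      mul_le_one₀ ih hS0 ih
    have hdec : ∑ k ∈ Finset.Icc 1 (n+1), sqc k
        = sqc 1 + ∑ k ∈ Finset.Icc 2 (n+1), sqc k := by
      rw [Icc_one_eq (n+1) (by omega), Finset.sum_insert (by simp)]
    have h2 : ∑ m ∈ Finset.Icc 2 (n+1), (2 * sqc m)
        = 2 * ∑ k ∈ Finset.Icc 2 (n+1), sqc k := by rw [Finset.mul_sum]
    rw [hdec, sqc_one]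
    linarith [htri, hle, hprod, hsq, h2]

lemma key (n : ℕ) (hn : 1 ≤ n) (u : ℝ) (hu0 : 0 ≤ u) (hu1 : u ≤ 1) :
    0 ≤ (∑ k ∈ Finset.Icc 1 n, sqc k * u^k)^2
        - 2*(∑ k ∈ Finset.Icc 1 n, sqc k * u^k) + u ∧
    (∑ k ∈ Finset.Icc 1 n, sqc k * u^k)^2
        - 2*(∑ k ∈ Finset.Icc 1 n, sqc k * u^k) + u ≤ u^(n+1) := by
  set s := ∑ k ∈ Finset.Icc 1 n, sqc k * u^k with hs
  have hsq : s^2 = ∑ p ∈ Finset.Icc 1 n ×ˢ Finset.Icc 1 n,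
      sqc p.1 * sqc p.2 * u^(p.1+p.2) := by
    rw [sq, hs, Finset.sum_mul_sum, ← Finset.sum_product']
    exact Finset.sum_congr rfl fun p _ => by rw [pow_add]; ring
  have hsplit := Finset.sum_filter_add_sum_filter_not
    (Finset.Icc 1 n ×ˢ Finset.Icc 1 n) (fun p => p.1 + p.2 ≤ n)
    (fun p => sqc p.1 * sqc p.2 * u^(p.1+p.2))
  have hin : ∑ p ∈ (Finset.Icc 1 n ×ˢ Finset.Icc 1 n).filter (fun p => p.1 + p.2 ≤ n),
      sqc p.1 * sqc p.2 * u^(p.1+p.2) = 2*s - u := by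
    rw [← tri_sum (fun i j => sqc i * sqc j * u^(i+j)) n]
    have h1 : ∀ m ∈ Finset.Icc 2 n,
        ∑ i ∈ Finset.Icc 1 (m-1), sqc i * sqc (m-i) * u^(i+(m-i))
          = 2 * (sqc m * u^m) := by
      intro m hm
      have hm' := Finset.mem_Icc.mp hm
      have h2 : ∀ i ∈ Finset.Icc 1 (m-1),
          sqc i * sqc (m-i) * u^(i+(m-i)) = sqc i * sqc (m-i) * u^m := by
        intro i hi
        have hi' := Finset.mem_Icc.mp hi
        congr 2
        omega
      rw [Finset.sum_congr rfl h2, ← Finset.sum_mul, sqc_rec m hm'.1]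
      ring
    rw [Finset.sum_congr rfl h1, ← Finset.mul_sum]
    have hdec : s = sqc 1 * u^1 + ∑ k ∈ Finset.Icc 2 n, sqc k * u^k := by
      rw [hs, Icc_one_eq n hn, Finset.sum_insert (by simp)]
    rw [hdec, sqc_one]
    ring
  have hout : (∑ p ∈ (Finset.Icc 1 n ×ˢ Finset.Icc 1 n).filter (fun p => ¬ p.1 + p.2 ≤ n),
      sqc p.1 * sqc p.2 * u^(p.1+p.2)) = s^2 - 2*s + u := by
    rw [hsq]; linarith [hsplit, hin]
  constructor
  · rw [← hout]
    exact Finset.sum_nonneg fun p _ =>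
      mul_nonneg (mul_nonneg (sqc_nonneg _) (sqc_nonneg _)) (pow_nonneg hu0 _)
  · rw [← hout]
    have hterm : ∀ p ∈ (Finset.Icc 1 n ×ˢ Finset.Icc 1 n).filter
        (fun p => ¬ p.1 + p.2 ≤ n),
        sqc p.1 * sqc p.2 * u^(p.1+p.2) ≤ sqc p.1 * sqc p.2 * u^(n+1) := by
      intro p hp
      have hp' := Finset.mem_filter.mp hp
      exact mul_le_mul_of_nonneg_left
        (pow_le_pow_of_le_one hu0 hu1 (by omega))
        (mul_nonneg (sqc_nonneg _) (sqc_nonneg _))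
    calc ∑ p ∈ (Finset.Icc 1 n ×ˢ Finset.Icc 1 n).filter (fun p => ¬ p.1 + p.2 ≤ n),
          sqc p.1 * sqc p.2 * u^(p.1+p.2)
        ≤ ∑ p ∈ (Finset.Icc 1 n ×ˢ Finset.Icc 1 n).filter (fun p => ¬ p.1 + p.2 ≤ n),
          sqc p.1 * sqc p.2 * u^(n+1) := Finset.sum_le_sum hterm
      _ ≤ ∑ p ∈ Finset.Icc 1 n ×ˢ Finset.Icc 1 n, sqc p.1 * sqc p.2 * u^(n+1) :=
          Finset.sum_le_sum_of_subset_of_nonneg (Finset.filter_subset _ _)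
            (fun p _ _ => mul_nonneg (mul_nonneg (sqc_nonneg _) (sqc_nonneg _))
              (pow_nonneg hu0 _))
      _ = ((∑ k ∈ Finset.Icc 1 n, sqc k) * (∑ k ∈ Finset.Icc 1 n, sqc k)) * u^(n+1) := by
          rw [← Finset.sum_mul]
          congr 1
          rw [Finset.sum_mul_sum, ← Finset.sum_product']
      _ ≤ 1 * u^(n+1) := by
          apply mul_le_mul_of_nonneg_right _ (pow_nonneg hu0 _)
          exact mul_le_one₀ (sum_sqc_le_one n)
            (Finset.sum_nonneg fun k _ => sqc_nonneg k) (sum_sqc_le_one n)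
      _ = u^(n+1) := one_mul _

lemma approx (n : ℕ) (hn : 1 ≤ n) (x : ℝ) (hx0 : 0 ≤ x) (hx1 : x ≤ 1) :
    |(1 - ∑ k ∈ Finset.Icc 1 n, sqc k * (1-x)^k) - Real.sqrt x|
      ≤ Real.sqrt ((1-x)^(n+1)) := by
  set u : ℝ := 1 - x with hu
  have hu0 : 0 ≤ u := by linarith
  have hu1 : u ≤ 1 := by linarith
  set s : ℝ := ∑ k ∈ Finset.Icc 1 n, sqc k * u^k with hs
  have hs0 : 0 ≤ s :=
    Finset.sum_nonneg fun k _ => mul_nonneg (sqc_nonneg k) (pow_nonneg hu0 _)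
  have hs1 : s ≤ 1 := by
    have h1 : ∀ k ∈ Finset.Icc 1 n, sqc k * u^k ≤ sqc k := by
      intro k hk
      have := pow_le_one₀ hu0 hu1 (n := k)
      nlinarith [sqc_nonneg k]
    calc s ≤ ∑ k ∈ Finset.Icc 1 n, sqc k := Finset.sum_le_sum h1
      _ ≤ 1 := sum_sqc_le_one n
  obtain ⟨hE0, hE1⟩ := key n hn u hu0 hu1
  set t : ℝ := 1 - s with ht
  have ht0 : 0 ≤ t := by linarith
  have htsq : t^2 = x + (s^2 - 2*s + u) := by rw [ht, hu]; ring
  have hsx : Real.sqrt x ≤ t := by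
    have : Real.sqrt x ≤ Real.sqrt (t^2) := Real.sqrt_le_sqrt (by nlinarith)
    rwa [Real.sqrt_sq ht0] at this
  have hxx : Real.sqrt x * Real.sqrt x = x := Real.mul_self_sqrt hx0
  have hdiff : (t - Real.sqrt x)^2 ≤ s^2 - 2*s + u := by
    nlinarith [Real.sqrt_nonneg x]
  have habs : |t - Real.sqrt x| = t - Real.sqrt x := abs_of_nonneg (by linarith)
  rw [habs]
  calc t - Real.sqrt x = Real.sqrt ((t - Real.sqrt x)^2) := by
        rw [Real.sqrt_sq (by linarith)]
    _ ≤ Real.sqrt (u^(n+1)) := Real.sqrt_le_sqrt (le_trans hdiff hE1)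

/-- Polynomial approximation of the square root (cf. Lemma 17 of Gilyén–Poremba):
there is a constant `c > 0` such that for all `0 < κ ≤ 1/2` and `0 < ε ≤ 1/2` there is a
real polynomial `f` of degree at most `c · (1/κ) · ln(1/ε)` with
`|f(x) − (1/2)√x| ≤ ε` for every `x ∈ [κ, 1]`. -/
theorem stmt16 :
    ∃ c : ℝ, 0 < c ∧
      ∀ κ ε : ℝ, 0 < κ → κ ≤ 1 / 2 → 0 < ε → ε ≤ 1 / 2 →
        ∃ f : Polynomial ℝ,
          (f.natDegree : ℝ) ≤ c * (1 / κ) * Real.log (1 / ε) ∧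
          ∀ x ∈ Set.Icc κ 1, |f.eval x - (1 / 2) * Real.sqrt x| ≤ ε := by
  refine ⟨4, by norm_num, fun κ ε hκ0 hκ2 hε0 hε2 => ?_⟩
  set L : ℝ := Real.log (1 / ε) with hLdef
  have h2ε : (2:ℝ) ≤ 1 / ε := by
    rw [le_div_iff₀ hε0]; linarith
  have hL2 : Real.log 2 ≤ L := Real.log_le_log (by norm_num) h2ε
  have hlog2 : (0.6:ℝ) ≤ Real.log 2 := by
    have := Real.log_two_gt_d9; linarith
  have hL0 : 0 < L := by linarith
  have hκinv : (2:ℝ) ≤ 1 / κ := by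
    rw [le_div_iff₀ hκ0]; linarith
  set a : ℝ := 2 / κ * L with hadef
  have ha1 : 1 ≤ a := by
    have : 4 * L ≤ a := by
      rw [hadef]
      have : (4:ℝ) ≤ 2 / κ := by
        rw [le_div_iff₀ hκ0]; linarith
      nlinarith
    nlinarith
  have ha0 : 0 ≤ a := by linarith
  set n : ℕ := ⌈a⌉₊ with hndef
  have hn1 : 1 ≤ n := Nat.one_le_ceil_iff.mpr (by linarith)
  have hna : a ≤ (n : ℝ) := Nat.le_ceil a
  have hnup : (n : ℝ) ≤ 2 * a := by
    have := Nat.ceil_lt_add_one ha0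
    have : (n:ℝ) < a + 1 := this
    linarith
  refine ⟨Polynomial.C (1/2) * (1 - ∑ k ∈ Finset.Icc 1 n,
      Polynomial.C (sqc k) * (1 - Polynomial.X)^k), ?_, ?_⟩
  · -- degree bound
    have hdeg : (Polynomial.C (1/2:ℝ) * (1 - ∑ k ∈ Finset.Icc 1 n,
        Polynomial.C (sqc k) * (1 - Polynomial.X)^k)).natDegree ≤ n := by
      refine le_trans (Polynomial.natDegree_C_mul_le _ _) ?_
      refine le_trans (Polynomial.natDegree_sub_le _ _) ?_
      refine max_le (by simp) ?_
      refine Polynomial.natDegree_sum_le_of_forall_le _ _ fun k hk => ?_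
      refine le_trans (Polynomial.natDegree_C_mul_le _ _) ?_
      refine le_trans (Polynomial.natDegree_pow_le) ?_
      have h1X : (1 - Polynomial.X : Polynomial ℝ).natDegree ≤ 1 :=
        le_trans (Polynomial.natDegree_sub_le _ _)
          (max_le (by simp) (by simp [Polynomial.natDegree_X]))
      have := (Finset.mem_Icc.mp hk).2
      calc k * (1 - Polynomial.X : Polynomial ℝ).natDegree ≤ k * 1 :=
            Nat.mul_le_mul_left k h1X
        _ ≤ n := by omega
    calc ((Polynomial.C (1/2:ℝ) * (1 - ∑ k ∈ Finset.Icc 1 n,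
        Polynomial.C (sqc k) * (1 - Polynomial.X)^k)).natDegree : ℝ)
        ≤ (n : ℝ) := by exact_mod_cast hdeg
      _ ≤ 2 * a := hnup
      _ = 4 * (1 / κ) * L := by rw [hadef]; ring
  · intro x hx
    obtain ⟨hxκ, hx1⟩ := hx
    have hx0 : 0 ≤ x := le_trans (le_of_lt hκ0) hxκ
    have heval : (Polynomial.C (1/2:ℝ) * (1 - ∑ k ∈ Finset.Icc 1 n,
        Polynomial.C (sqc k) * (1 - Polynomial.X)^k)).eval x
        = 1/2 * (1 - ∑ k ∈ Finset.Icc 1 n, sqc k * (1-x)^k) := by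
      simp [Polynomial.eval_finset_sum]
    rw [heval]
    have happrox := approx n hn1 x hx0 hx1
    have hbound : Real.sqrt ((1-x)^(n+1)) ≤ 2 * ε := by
      have h1 : (1-x)^(n+1) ≤ (1-κ)^(n+1) :=
        pow_le_pow_left₀ (by linarith) (by linarith) _
      have h2 : (1-κ)^(n+1) ≤ Real.exp (-κ)^(n+1) :=
        pow_le_pow_left₀ (by linarith) (by linarith [Real.add_one_le_exp (-κ)]) _
      have h3 : Real.exp (-κ)^(n+1) = Real.exp (-(κ * (n+1))) := by
        rw [← Real.exp_nat_mul]; congr 1; push_cast; ring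
      have h4 : Real.sqrt (Real.exp (-(κ * (n+1)))) = Real.exp (-(κ * (n+1))/2) := by
        rw [show Real.exp (-(κ * (n+1))) = Real.exp (-(κ * (n+1))/2) ^ 2 by
          rw [pow_two, ← Real.exp_add]; ring_nf]
        exact Real.sqrt_sq (Real.exp_nonneg _)
      have h5 : Real.exp (-(κ * (n+1))/2) ≤ ε := by
        rw [show ε = Real.exp (Real.log ε) from (Real.exp_log hε0).symm]
        apply Real.exp_le_exp.mpr
        have hLε : Real.log ε = -L := by
          rw [hLdef, one_div, Real.log_inv, neg_neg]
        rw [hLε]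
        have : 2 * L ≤ κ * (n+1) := by
          have hκa : κ * a = 2 * L := by
            rw [hadef]; field_simp
          have : κ * a ≤ κ * (n+1) := by
            apply mul_le_mul_of_nonneg_left (by linarith) (le_of_lt hκ0)
          linarith
        linarith
      calc Real.sqrt ((1-x)^(n+1)) ≤ Real.sqrt (Real.exp (-(κ * (n+1)))) := by
            apply Real.sqrt_le_sqrt; rw [← h3]; linarith
        _ = Real.exp (-(κ * (n+1))/2) := h4
        _ ≤ ε := h5
        _ ≤ 2 * ε := by linarith
    have : |1/2 * (1 - ∑ k ∈ Finset.Icc 1 n, sqc k * (1-x)^k) - 1/2 * Real.sqrt x|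
        = 1/2 * |(1 - ∑ k ∈ Finset.Icc 1 n, sqc k * (1-x)^k) - Real.sqrt x| := by
      rw [show 1/2 * (1 - ∑ k ∈ Finset.Icc 1 n, sqc k * (1-x)^k) - 1/2 * Real.sqrt x
        = 1/2 * ((1 - ∑ k ∈ Finset.Icc 1 n, sqc k * (1-x)^k) - Real.sqrt x) by ring,
        abs_mul]
      norm_num
    rw [this]
    linarith
end
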